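/- arXiv:2109.09842 — 4 statements merged into one kernel-verified Lean document; each statement's English description precedes it below -/
import Mathlib

section
/- There exists a morphism of directed hypergraphs f: G → H and an integer c = 2 such that the map on paths induced by f does not carry the 2-connective path complex 𝔠²(G) into 𝔠²(H); i.e., the c-connective path complex construction is not functorial for c ≥ 2. Concretely: for G with vertices {1,2,3,4} and arrows e₁ = ({1} → {2,3}), e₂ = ({1} → {2,4}), and H with vertices {a,b,c} and single arrow ({a} → {b,c}), the morphism given by f(1)=a, f(2)=b, f(3)=f(4)=c is a morphism of directed hypergraphs, the path (1,2) lies in 𝔠²(G), but its image (a,b) does not lie in 𝔠²(H). -/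
/-- A directed hypergraph: a vertex type, an arrow type, and origin/end subsets. -/
structure DiHyp where
  V : Type
  E : Type
  orig : E → Set V
  dest : E → Set V

/-- The axioms of Definition 2.1: origins and ends are non-empty and disjoint,
and the union of origins and ends of all arrows is the whole vertex set. -/
def DiHyp.IsLegal (G : DiHyp) : Prop :=
  (∀ e, (G.orig e).Nonempty) ∧ (∀ e, (G.dest e).Nonempty) ∧
    (∀ e, Disjoint (G.orig e) (G.dest e)) ∧
    (⋃ e, G.orig e ∪ G.dest e) = Set.univ

/-- A pair of maps is a morphism of directed hypergraphs iff
ℙ(f_V) ∘ φ_G = φ_H ∘ f_E. -/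
def DiHyp.IsHom (G H : DiHyp) (fV : G.V → H.V) (fE : G.E → H.E) : Prop :=
  ∀ e, H.orig (fE e) = fV '' G.orig e ∧ H.dest (fE e) = fV '' G.dest e

/-- Bundled morphism of directed hypergraphs. -/
structure DiHyp.Hom (G H : DiHyp) where
  onV : G.V → H.V
  onE : G.E → H.E
  comm : DiHyp.IsHom G H onV onE

/-- The set P₀₁(G) of subsets occurring as origin or end of some arrow. -/
def DiHyp.P01 (G : DiHyp) : Set (Set G.V) := {C | ∃ e, G.orig e = C ∨ G.dest e = C}

/-- The box product of directed hypergraphs. -/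
def DiHyp.box (G H : DiHyp) : DiHyp where
  V := G.V × H.V
  E := (G.E × {C : Set H.V // C ∈ H.P01}) ⊕ ({A : Set G.V // A ∈ G.P01} × H.E)
  orig := fun e => match e with
    | .inl (e, C) => G.orig e ×ˢ C.1
    | .inr (A, e) => A.1 ×ˢ H.orig e
  dest := fun e => match e with
    | .inl (e, C) => G.dest e ×ˢ C.1
    | .inr (A, e) => A.1 ×ˢ H.dest e

/-- The line digraph I₁, as a directed hypergraph: one arrow {b} → {!b}. -/
def lineI1 (b : Bool) : DiHyp where
  V := Bool
  E := Unit
  orig _ := {b}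
  dest _ := {!b}

lemma singleton_mem_P01_lineI1 (b i : Bool) : ({i} : Set Bool) ∈ (lineI1 b).P01 :=
  ⟨(), by cases b <;> cases i <;> simp [lineI1]⟩

/-- A path complex on V: a set of non-empty finite sequences closed under
deleting the first or the last vertex. -/
def IsPathComplex {V : Type} (P : Set (List V)) : Prop :=
  (∀ p ∈ P, p ≠ []) ∧ ∀ p ∈ P, 2 ≤ p.length → p.tail ∈ P ∧ p.dropLast ∈ P

/-- The connective path complex 𝔠(G): consecutive vertices are equal or joined by
an arrow of G (the first in the origin, the second in the end). -/
def connPaths (G : DiHyp) : Set (List G.V) :=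
  {p | p ≠ [] ∧ p.Chain' fun v w => v = w ∨ ∃ e, v ∈ G.orig e ∧ w ∈ G.dest e}

/-- The c-connective path complex 𝔠ᶜ(G): consecutive distinct vertices must be
joined by at least c distinct arrows of G. -/
def connPathsC (G : DiHyp) (c : ℕ) : Set (List G.V) :=
  {p | p ≠ [] ∧ p.Chain' fun v w => v = w ∨
    ∃ S : Finset G.E, c ≤ S.card ∧ ∀ e ∈ S, v ∈ G.orig e ∧ w ∈ G.dest e}

/-- The directed hypergraph G of Example 3.2 ii): vertices {1,2,3,4} (as Fin 4,
0 ↦ vertex 1, etc.), arrows e₁ = ({1} → {2,3}) and e₂ = ({1} → {2,4}). -/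
def Gex : DiHyp where
  V := Fin 4
  E := Fin 2
  orig _ := {0}
  dest i := if i = 0 then {1, 2} else {1, 3}

/-- The directed hypergraph H of Example 3.2 ii): vertices {a,b,c} (as Fin 3),
one arrow ({a} → {b,c}). -/
def Hex : DiHyp where
  V := Fin 3
  E := Unit
  orig _ := {0}
  dest _ := {1, 2}

/-- The vertex map 1 ↦ a, 2 ↦ b, 3 ↦ c, 4 ↦ c. -/
def fex : Fin 4 → Fin 3 := ![0, 1, 2, 2]

/-! Both arrows of `Gex` run from vertex 1 to vertex 2, so `(1, 2)` is 2-connective in `Gex`.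
The morphism identifies them with the single arrow of `Hex`, and a hypergraph with fewer than
`c` arrows has no `c`-connective step between distinct vertices. -/

lemma pair_mem_connPathsC_iff {G : DiHyp} {c : ℕ} {v w : G.V} :
    [v, w] ∈ connPathsC G c ↔
      v = w ∨ ∃ S : Finset G.E, c ≤ S.card ∧ ∀ e ∈ S, v ∈ G.orig e ∧ w ∈ G.dest e :=
  (and_iff_right (List.cons_ne_nil _ _)).trans List.isChain_pair

lemma pair_notMem_connPathsC_of_card_lt {G : DiHyp} [Fintype G.E] {c : ℕ}
    (hc : Fintype.card G.E < c) {v w : G.V} (hvw : v ≠ w) : [v, w] ∉ connPathsC G c := by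
  rw [pair_mem_connPathsC_iff]
  rintro (h | ⟨S, hS, -⟩)
  exacts [hvw h, (hS.trans S.card_le_univ).not_gt hc]

lemma isHom_Gex_Hex : DiHyp.IsHom Gex Hex fex (fun _ => ()) := by
  intro (e : Fin 2)
  fin_cases e <;> simp [Gex, Hex, Set.image_insert_eq, fex]

lemma Gex.zero_mem_orig_and_one_mem_dest (e : Gex.E) :
    (0 : Fin 4) ∈ Gex.orig e ∧ (1 : Fin 4) ∈ Gex.dest e := by
  refine ⟨rfl, ?_⟩
  dsimp only [Gex]
  split <;> exact Or.inl rfl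

instance : Fintype Hex.E := inferInstanceAs (Fintype Unit)

/-- the 2-connective path complex is not functorial: fex gives a
morphism of directed hypergraphs Gex → Hex, the path (1,2) lies in 𝔠²(Gex), but
its image (a,b) does not lie in 𝔠²(Hex). -/
theorem stmt_9 :
    DiHyp.IsHom Gex Hex fex (fun _ => ()) ∧
    ([0, 1] : List (Fin 4)) ∈ connPathsC Gex 2 ∧
    (([0, 1] : List (Fin 4)).map fex) ∉ connPathsC Hex 2 := by
  refine ⟨isHom_Gex_Hex, ?_, ?_⟩
  · exact pair_mem_connPathsC_iff.2 <| Or.inr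
      ⟨(Finset.univ : Finset (Fin 2)), le_rfl, fun e _ => Gex.zero_mem_orig_and_one_mem_dest e⟩
  · exact pair_notMem_connPathsC_of_card_lt (G := Hex) (by decide) (show fex 0 ≠ fex 1 by decide)
end

section
/- The assignment G ↦ 𝔅(G) sending a directed hypergraph G to its bold path complex, with morphisms acting vertexwise on paths, is a functor from the category of directed hypergraphs to the category of path complexes; in particular, the image of every bold path under a morphism of directed hypergraphs is again a bold path. -/
def DiHyp.Hom.id (G : DiHyp) : G.Hom G :=
  ⟨_root_.id, _root_.id, fun e => ⟨(Set.image_id _).symm, (Set.image_id _).symm⟩⟩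

def DiHyp.Hom.comp {G H K : DiHyp} (g : H.Hom K) (f : G.Hom H) : G.Hom K :=
  ⟨g.onV ∘ f.onV, g.onE ∘ f.onE, fun e => by
    obtain ⟨h1, h2⟩ := f.comm e
    obtain ⟨g1, g2⟩ := g.comm (f.onE e)
    constructor <;> simp [Function.comp, g1, g2, h1, h2, Set.image_image]⟩

/-- The bold path complex 𝔅(G): q is a bold path iff either q lies entirely in the
origin or in the end of a single hyperedge (the degenerate case of an empty edge
sequence), or q decomposes as a concatenation
p₀ ∨ (v₀w₀) ∨ p₁ ∨ (v₁w₁) ∨ ⋯ ∨ p_r ∨ (v_r w_r) ∨ p_{r+1}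
along a chain of hyperedges (A₀ → B₀), …, (A_r → B_r) with B_i ∩ A_{i+1} ≠ ∅,
where p₀ ⊆ A₀, p_{r+1} ⊆ B_r, p_i ⊆ B_{i-1} ∩ A_i, v_i ∈ A_i, w_i ∈ B_i,
p_i ends at v_i and p_{i+1} starts at w_i (so all concatenations are defined). -/
def IsBold (G : DiHyp) (q : List G.V) : Prop :=
  q ≠ [] ∧
    ((∃ e : G.E, (∀ x ∈ q, x ∈ G.orig e) ∨ ∀ x ∈ q, x ∈ G.dest e) ∨
      ∃ (r : ℕ) (e : Fin (r + 1) → G.E) (p : Fin (r + 2) → List G.V)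
        (v w : Fin (r + 1) → G.V),
        (∀ i : Fin r, (G.dest (e i.castSucc) ∩ G.orig (e i.succ)).Nonempty) ∧
        (∀ i, p i ≠ []) ∧
        (∀ x ∈ p 0, x ∈ G.orig (e 0)) ∧
        (∀ x ∈ p (Fin.last (r + 1)), x ∈ G.dest (e (Fin.last r))) ∧
        (∀ i : Fin r, ∀ x ∈ p i.succ.castSucc,
          x ∈ G.dest (e i.castSucc) ∧ x ∈ G.orig (e i.succ)) ∧
        (∀ i : Fin (r + 1), v i ∈ G.orig (e i) ∧ w i ∈ G.dest (e i)) ∧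
        (∀ i : Fin (r + 1),
          (p i.castSucc).getLast? = some (v i) ∧ (p i.succ).head? = some (w i)) ∧
        q = (List.ofFn p).flatten)

/-- G ↦ 𝔅(G) is a functor from directed hypergraphs to path
complexes: the image of a bold path under a morphism of directed hypergraphs is a
bold path, and the induced maps respect identities and composition. -/
theorem stmt_13 :
    (∀ (G H : DiHyp) (f : G.Hom H) (q : List G.V),
      IsBold G q → IsBold H (q.map f.onV)) ∧
    (∀ (G : DiHyp) (q : List G.V), q.map (DiHyp.Hom.id G).onV = q) ∧
    (∀ (G H K : DiHyp) (f : G.Hom H) (g : H.Hom K) (q : List G.V),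
      q.map ((g.comp f).onV) = (q.map f.onV).map g.onV) := by
  refine ⟨?_, fun G q => by simp [DiHyp.Hom.id], fun G H K f g q => by
    simp [DiHyp.Hom.comp, List.map_map]⟩
  rintro G H f q ⟨hne, hq⟩
  refine ⟨by simpa using hne, ?_⟩
  rcases hq with ⟨e, he⟩ | ⟨r, e, p, v, w, hint, hpne, h0, hlast, hmid, hvw, hends, hflat⟩
  · left
    refine ⟨f.onE e, ?_⟩
    obtain ⟨c1, c2⟩ := f.comm e
    rcases he with he | he
    · exact Or.inl fun x hx => by
        rw [c1]; obtain ⟨y, hy, rfl⟩ := List.mem_map.mp hx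
        exact ⟨y, he y hy, rfl⟩
    · exact Or.inr fun x hx => by
        rw [c2]; obtain ⟨y, hy, rfl⟩ := List.mem_map.mp hx
        exact ⟨y, he y hy, rfl⟩
  · right
    refine ⟨r, f.onE ∘ e, fun i => (p i).map f.onV, f.onV ∘ v, f.onV ∘ w,
      ?_, ?_, ?_, ?_, ?_, ?_, ?_, ?_⟩ <;> (try simp only [Function.comp_apply])
    · intro i
      obtain ⟨x, hx1, hx2⟩ := hint i
      refine ⟨f.onV x, ?_, ?_⟩
      · rw [(f.comm (e i.castSucc)).2]; exact ⟨x, hx1, rfl⟩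
      · rw [(f.comm (e i.succ)).1]; exact ⟨x, hx2, rfl⟩
    · intro i; simpa using hpne i
    · intro x hx
      obtain ⟨y, hy, rfl⟩ := List.mem_map.mp hx
      rw [(f.comm (e 0)).1]; exact ⟨y, h0 y hy, rfl⟩
    · intro x hx
      obtain ⟨y, hy, rfl⟩ := List.mem_map.mp hx
      rw [(f.comm (e (Fin.last r))).2]; exact ⟨y, hlast y hy, rfl⟩
    · intro i x hx
      obtain ⟨y, hy, rfl⟩ := List.mem_map.mp hx
      obtain ⟨hy1, hy2⟩ := hmid i y hy
      exact ⟨by rw [(f.comm (e i.castSucc)).2]; exact ⟨y, hy1, rfl⟩,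
        by rw [(f.comm (e i.succ)).1]; exact ⟨y, hy2, rfl⟩⟩
    · intro i
      obtain ⟨h1, h2⟩ := hvw i
      exact ⟨by rw [(f.comm (e i)).1]; exact ⟨v i, h1, rfl⟩,
        by rw [(f.comm (e i)).2]; exact ⟨w i, h2, rfl⟩⟩
    · intro i
      obtain ⟨h1, h2⟩ := hends i
      constructor
      · rw [List.getLast?_map, h1]; rfl
      · rw [List.head?_map, h2]; rfl
    · rw [hflat]
      simp [List.map_flatten, List.map_ofFn, Function.comp_def]
end

section
/- For any directed hypergraph G = (V, E) and I₁ = (0 → 1), there is an inclusion of path complexes λ: [𝔅(G)]^↑ → 𝔅(G □ I₁); that is, every path of the cylinder of the bold path complex of G is a bold path of G □ I₁, under the identification of V × {0,1} with V ⊔ V'. -/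
/-- The cylinder P^↑ = P ∪ P' ∪ P^# of a set of paths, on V × Bool
(false = the bottom copy V, true = the primed top copy V'). -/
def cylinder {V : Type} (P : Set (List V)) : Set (List (V × Bool)) :=
  {q | (∃ p ∈ P, q = p.map (·, false)) ∨ (∃ p ∈ P, q = p.map (·, true)) ∨
    ∃ p ∈ P, ∃ k : ℕ, k < p.length ∧
      q = (p.take (k + 1)).map (·, false) ++ (p.drop k).map (·, true)}

/-! A bold path is a concatenation of nonempty blocks `p₀, …, pₙ` in which every arrow `eᵢ`
leads from the block `pᵢ`, lying in its origin, to the block `pᵢ₊₁`, lying in its end. Read from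
the left, such a decomposition is either a single block, or a block followed by an arrow and a
decomposition whose first block lies in the end of that arrow.
Each layer `V × {c}` of `G □ H` carries a copy of every arrow of `G`, so `p ↦ p × {c}` preserves
bold paths. A path of `P^#` climbs at a vertex of some block `pᵢ`, and `pᵢ` lies in a set
`C ∈ P₀₁(G)` (the origin of `eᵢ`, or the end of the last arrow); the vertical arrow
`C × {0} → C × {1}` of `G □ I₁` splits `pᵢ` into its bottom and top parts. -/

open Set

section BoldPaths

inductive IsBoldFrom (G : DiHyp) : Set G.V → List G.V → Prop
  | block {S : Set G.V} {p : List G.V} (hp : p ≠ []) (hpS : ∀ x ∈ p, x ∈ S) : IsBoldFrom G S p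
  | arrow {S : Set G.V} (e : G.E) {p q : List G.V} (hp : p ≠ [])
      (hpS : ∀ x ∈ p, x ∈ S ∩ G.orig e) (hq : IsBoldFrom G (G.dest e) q) :
      IsBoldFrom G S (p ++ q)

def IsBoldChain (G : DiHyp) {n : ℕ} (e : Fin n → G.E) (p : Fin (n + 1) → List G.V) : Prop :=
  (∀ j, p j ≠ []) ∧
    ∀ i, (∀ x ∈ p i.castSucc, x ∈ G.orig (e i)) ∧ ∀ x ∈ p i.succ, x ∈ G.dest (e i)

variable {G : DiHyp}

theorem isBoldChain_cons {n : ℕ} {e₀ : G.E} {e : Fin n → G.E} {p₀ : List G.V}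
    {p : Fin (n + 1) → List G.V} :
    IsBoldChain G (Fin.cons e₀ e) (Fin.cons p₀ p) ↔
      p₀ ≠ [] ∧ (∀ x ∈ p₀, x ∈ G.orig e₀) ∧ (∀ x ∈ p 0, x ∈ G.dest e₀) ∧ IsBoldChain G e p := by
  simp only [IsBoldChain, Fin.forall_fin_succ, Fin.cons_zero, Fin.cons_succ, Fin.castSucc_zero,
    ← Fin.succ_castSucc]
  tauto

theorem isBoldFrom_iff {S : Set G.V} {q : List G.V} :
    IsBoldFrom G S q ↔ ∃ (n : ℕ) (e : Fin n → G.E) (p : Fin (n + 1) → List G.V),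
      IsBoldChain G e p ∧ (∀ x ∈ p 0, x ∈ S) ∧ q = (List.ofFn p).flatten := by
  constructor
  · intro h
    induction h with
    | block hp hpS =>
      exact ⟨0, Fin.elim0, fun _ => _, ⟨fun _ => hp, fun i => i.elim0⟩, hpS, by simp⟩
    | arrow e₀ hp hpS _ ih =>
      obtain ⟨n, e, p, hc, hp0, rfl⟩ := ih
      refine ⟨n + 1, Fin.cons e₀ e, Fin.cons _ p,
        isBoldChain_cons.mpr ⟨hp, fun x hx => (hpS x hx).2, hp0, hc⟩,
        fun x hx => (hpS x hx).1, by simp [List.ofFn_succ]⟩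
  · rintro ⟨n, e, p, hc, hp0, rfl⟩
    induction n generalizing S with
    | zero => simpa using IsBoldFrom.block (hc.1 0) hp0
    | succ n ih =>
      rw [← Fin.cons_self_tail e, ← Fin.cons_self_tail p, isBoldChain_cons] at hc
      obtain ⟨hne, horig, hdest, htail⟩ := hc
      rw [List.ofFn_succ, List.flatten_cons]
      exact .arrow (e 0) hne (fun x hx => ⟨hp0 x hx, horig x hx⟩) (ih _ _ htail hdest)

theorem isBold_iff_isBoldChain {q : List G.V} :
    IsBold G q ↔ q ≠ [] ∧ ((∃ e, (∀ x ∈ q, x ∈ G.orig e) ∨ ∀ x ∈ q, x ∈ G.dest e) ∨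
      ∃ (r : ℕ) (e : Fin (r + 1) → G.E) (p : Fin (r + 2) → List G.V),
        IsBoldChain G e p ∧ q = (List.ofFn p).flatten) := by
  refine and_congr_right fun _ => or_congr_right ⟨?_, ?_⟩
  · rintro ⟨r, e, p, _, _, -, hne, hfirst, hlast, hmid, -, -, rfl⟩
    refine ⟨r, e, p, ⟨hne, fun i => ⟨?_, ?_⟩⟩, rfl⟩
    · exact Fin.cases hfirst (fun j x hx => (hmid j x hx).2) i
    · exact Fin.lastCases hlast (fun j x hx => (hmid j x hx).1) i
  · rintro ⟨r, e, p, ⟨hne, hc⟩, rfl⟩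
    refine ⟨r, e, p, fun i => (p i.castSucc).getLast (hne _), fun i => (p i.succ).head (hne _),
      fun i => ⟨(p i.castSucc.succ).head (hne _), (hc i.castSucc).2 _ (List.head_mem _),
        (hc i.succ).1 _ (List.head_mem _)⟩,
      hne, (hc 0).1, (hc (Fin.last r)).2,
      fun i x hx => ⟨(hc i.castSucc).2 x hx, (hc i.succ).1 x hx⟩,
      fun i => ⟨(hc i).1 _ (List.getLast_mem _), (hc i).2 _ (List.head_mem _)⟩,
      fun i => ⟨List.getLast?_eq_some_getLast _, List.head?_eq_some_head _⟩, rfl⟩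

theorem isBold_iff_exists_isBoldFrom {q : List G.V} :
    IsBold G q ↔ ∃ S ∈ G.P01, IsBoldFrom G S q := by
  rw [isBold_iff_isBoldChain]
  constructor
  · rintro ⟨hq, ⟨e, h | h⟩ | ⟨r, e, p, hc, rfl⟩⟩
    · exact ⟨_, ⟨e, .inl rfl⟩, .block hq h⟩
    · exact ⟨_, ⟨e, .inr rfl⟩, .block hq h⟩
    · exact ⟨_, ⟨e 0, .inl rfl⟩, isBoldFrom_iff.mpr ⟨r + 1, e, p, hc, (hc.2 0).1, rfl⟩⟩
  · rintro ⟨S, ⟨e₀, hS⟩, hq⟩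
    obtain ⟨_ | r, e, p, hc, hp0, rfl⟩ := isBoldFrom_iff.mp hq
    · refine ⟨by simp [hc.1], .inl ⟨e₀, ?_⟩⟩
      rcases hS with rfl | rfl <;> simp_all
    · exact ⟨by simp [hc.1], .inr ⟨r, e, p, hc, rfl⟩⟩

theorem IsBoldFrom.map {H : DiHyp} {f : G.V → H.V} {g : G.E → H.E}
    (horig : ∀ e, MapsTo f (G.orig e) (H.orig (g e)))
    (hdest : ∀ e, MapsTo f (G.dest e) (H.dest (g e))) {S : Set G.V} {T : Set H.V}
    (hST : MapsTo f S T) {q : List G.V} (hq : IsBoldFrom G S q) :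
    IsBoldFrom H T (q.map f) := by
  induction hq generalizing T with
  | block hp hpS =>
    exact .block (by simpa using hp) (List.forall_mem_map.mpr fun x hx => hST (hpS x hx))
  | arrow e hp hpS _ ih =>
    rw [List.map_append]
    exact .arrow (g e) (by simpa using hp)
      (List.forall_mem_map.mpr fun x hx => ⟨hST (hpS x hx).1, horig e (hpS x hx).2⟩) (ih (hdest e))

theorem IsBold.map {H : DiHyp} {f : G.V → H.V} {g : G.E → H.E}
    (horig : ∀ e, MapsTo f (G.orig e) (H.orig (g e)))
    (hdest : ∀ e, MapsTo f (G.dest e) (H.dest (g e))) {q : List G.V} (hq : IsBold G q) :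
    IsBold H (q.map f) := by
  obtain ⟨S, ⟨e, rfl | rfl⟩, hqS⟩ := isBold_iff_exists_isBoldFrom.mp hq
  · exact isBold_iff_exists_isBoldFrom.mpr ⟨_, ⟨g e, .inl rfl⟩, hqS.map horig hdest (horig e)⟩
  · exact isBold_iff_exists_isBoldFrom.mpr ⟨_, ⟨g e, .inr rfl⟩, hqS.map horig hdest (hdest e)⟩

def DiHyp.boxHoriz (G H : DiHyp) (e : G.E) {C : Set H.V} (hC : C ∈ H.P01) : (G.box H).E :=
  .inl (e, ⟨C, hC⟩)

def DiHyp.boxVert (G H : DiHyp) {A : Set G.V} (hA : A ∈ G.P01) (h : H.E) : (G.box H).E :=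
  .inr (⟨A, hA⟩, h)

theorem IsBold.box_layer {H : DiHyp} {C : Set H.V} (hC : C ∈ H.P01) {c : H.V} (hc : c ∈ C)
    {q : List G.V} (hq : IsBold G q) : IsBold (G.box H) (q.map (·, c)) :=
  hq.map (g := (G.boxHoriz H · hC))
    (fun _ _ hx => ⟨hx, hc⟩) (fun _ _ hx => ⟨hx, hc⟩)

def List.crossAt {α β : Type*} (b₀ b₁ : β) (k : ℕ) (q : List α) : List (α × β) :=
  (q.take (k + 1)).map (·, b₀) ++ (q.drop k).map (·, b₁)

theorem List.crossAt_append_of_length_le {α β : Type*} (b₀ b₁ : β) {k : ℕ} {p : List α}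
    (q : List α) (hk : p.length ≤ k) :
    (p ++ q).crossAt b₀ b₁ k = p.map (·, b₀) ++ q.crossAt b₀ b₁ (k - p.length) := by
  rw [List.crossAt, List.crossAt, List.take_append, List.take_of_length_le (by omega),
    List.drop_append, List.drop_eq_nil_of_le hk, List.nil_append,
    show k + 1 - p.length = k - p.length + 1 by omega, List.map_append, List.append_assoc]

theorem IsBoldFrom.box_crossAt_of_drop {H : DiHyp} {h : H.E} {b₀ b₁ : H.V}
    (hb₀ : b₀ ∈ H.orig h) (hb₁ : b₁ ∈ H.dest h) {S C : Set G.V} (hC : C ∈ G.P01)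
    {q : List G.V} {k : ℕ} (hk : k < q.length) (htake : ∀ x ∈ q.take (k + 1), x ∈ S ∩ C)
    (hdrop : IsBoldFrom G C (q.drop k)) :
    IsBoldFrom (G.box H) (S ×ˢ H.orig h) (q.crossAt b₀ b₁ k) := by
  have hq : q ≠ [] := List.ne_nil_of_length_pos (by omega)
  rw [List.crossAt]
  refine .arrow (G.boxVert H hC h) ?_ ?_ ?_
  · exact mt List.map_eq_nil_iff.mp (by simpa using hq)
  · exact List.forall_mem_map.mpr fun x hx => ⟨⟨(htake x hx).1, hb₀⟩, (htake x hx).2, hb₀⟩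
  · refine hdrop.map (g := (G.boxHoriz H · (C := H.dest h) ⟨h, .inr rfl⟩))
      (fun _ _ hx => ⟨hx, hb₁⟩) (fun _ _ hx => ⟨hx, hb₁⟩) ?_
    exact fun _ hx => ⟨hx, hb₁⟩

theorem IsBoldFrom.box_crossAt {H : DiHyp} {h : H.E} {b₀ b₁ : H.V} (hb₀ : b₀ ∈ H.orig h)
    (hb₁ : b₁ ∈ H.dest h) {S : Set G.V} (hS : S ∈ G.P01) {q : List G.V}
    (hq : IsBoldFrom G S q) {k : ℕ} (hk : k < q.length) :
    IsBoldFrom (G.box H) (S ×ˢ H.orig h) (q.crossAt b₀ b₁ k) := by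
  induction hq generalizing k with
  | block hp hpS =>
    exact box_crossAt_of_drop hb₀ hb₁ hS hk
      (fun x hx => ⟨hpS x (List.mem_of_mem_take hx), hpS x (List.mem_of_mem_take hx)⟩)
      (.block (by simp; omega) fun x hx => hpS x (List.mem_of_mem_drop hx))
  | @arrow S e p q hp hpS hq ih =>
    rcases lt_or_ge k p.length with hkp | hkp
    · refine box_crossAt_of_drop hb₀ hb₁ ⟨e, .inl rfl⟩ hk (fun x hx => ?_) ?_
      · rw [List.take_append_of_le_length hkp] at hx
        exact hpS x (List.mem_of_mem_take hx)
      · rw [List.drop_append_of_le_length hkp.le]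
        exact .arrow e (by simp; omega)
          (fun x hx => have hx := (hpS x (List.mem_of_mem_drop hx)).2; ⟨hx, hx⟩) hq
    · rw [List.length_append] at hk
      rw [List.crossAt_append_of_length_le _ _ _ hkp]
      refine .arrow (G.boxHoriz H e (C := H.orig h) ⟨h, .inl rfl⟩)
        (mt List.map_eq_nil_iff.mp hp) ?_
        (ih ⟨e, .inr rfl⟩ (k := k - p.length) (by omega))
      exact List.forall_mem_map.mpr fun x hx => ⟨⟨(hpS x hx).1, hb₀⟩, (hpS x hx).2, hb₀⟩

theorem IsBold.box_crossAt {H : DiHyp} {h : H.E} {b₀ b₁ : H.V} (hb₀ : b₀ ∈ H.orig h)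
    (hb₁ : b₁ ∈ H.dest h) {q : List G.V} (hq : IsBold G q) {k : ℕ} (hk : k < q.length) :
    IsBold (G.box H) (q.crossAt b₀ b₁ k) := by
  obtain ⟨S, hS, hqS⟩ := isBold_iff_exists_isBoldFrom.mp hq
  exact isBold_iff_exists_isBoldFrom.mpr
    ⟨_, ⟨G.boxVert H hS h, .inl rfl⟩, hqS.box_crossAt hb₀ hb₁ hS hk⟩

end BoldPaths

/-- for I₁ = (0 → 1), under the identification of V × {0,1} with
V ⊔ V', every path of the cylinder of the bold path complex 𝔅(G) is a bold path
of G □ I₁: an inclusion λ : [𝔅(G)]^↑ → 𝔅(G □ I₁) of path complexes. -/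
theorem stmt_15 (G : DiHyp) :
    cylinder {q | IsBold G q} ⊆ {q | IsBold (G.box (lineI1 false)) q} := by
  rintro _ (⟨q, hq, rfl⟩ | ⟨q, hq, rfl⟩ | ⟨q, hq, k, hk, rfl⟩)
  · exact hq.box_layer (H := lineI1 false) ⟨(), .inl rfl⟩ (mem_singleton false)
  · exact hq.box_layer (H := lineI1 false) ⟨(), .inr rfl⟩ (mem_singleton true)
  · exact hq.box_crossAt (H := lineI1 false) (h := ()) (mem_singleton false) (mem_singleton true) hk
end

section
/- Let G = (V, E) be a directed hypergraph, I₁ = (0 → 1), and I the hypergraph on {0, 1} with edges {0}, {1}, {0,1}. Then for every q ≥ 2 there is an inclusion of path complexes ℌ^q(𝔈(G □ I₁)) ⊆ ℌ^q(𝔈(G) × I); moreover this inclusion can be strict: there exists a directed hypergraph G for which ℌ²(𝔈(G □ I₁)) ≠ ℌ²(𝔈(G) × I). -/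
/-- The edge A ∪ B of the hypergraph 𝔈(G) corresponding to an arrow A → B of G. -/
def eEdge (G : DiHyp) (e : G.E) : Set G.V := G.orig e ∪ G.dest e

/-- The edge set of the hypergraph 𝔈(G). -/
def eEdges (G : DiHyp) : Set (Set G.V) := {s | ∃ e : G.E, s = eEdge G e}

/-- The path complex ℌ^q of a hypergraph with edge set `Ed`: paths in which every
q consecutive vertices lie in a common edge. -/
def hPaths {V : Type} (Ed : Set (Set V)) (q : ℕ) : Set (List V) :=
  {p | p ≠ [] ∧ ∀ l : List V, l <:+: p → l.length = q → ∃ s ∈ Ed, ∀ x ∈ l, x ∈ s}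

/-- The edge set of the hypergraph I on {0,1}: edges {0}, {1}, {0,1}. -/
def edgeI : Set (Set Bool) := {{false}, {true}, {false, true}}

/-- The edge set of the product 𝔈(G) × I of hypergraphs: all subsets S of e × e'
(e an edge of 𝔈(G), e' an edge of I) projecting onto e and onto e'. -/
def prodEdges {V : Type} (Ed : Set (Set V)) : Set (Set (V × Bool)) :=
  {S | ∃ e ∈ Ed, ∃ e' ∈ edgeI, S ⊆ e ×ˢ e' ∧ Prod.fst '' S = e ∧ Prod.snd '' S = e'}

/-!
Since ℌ^q is monotone in the edge set, the inclusion follows once every edge of `𝔈(G □ I₁)`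
lies in an edge of `𝔈(G) × I`: the edge `(A ∪ B) × {i}` is itself one, and `C × {0,1}` with
`C ∈ P₀₁(G)` lies in `(A ∪ B) × {0,1}` for an arrow `A → B` having `C` as origin or end.
For strictness take `G = I₁`: the diagonal `{(0,0), (1,1)}` is an edge of `𝔈(I₁) × I`, but every
edge of `𝔈(I₁ □ I₁)` is a product with a singleton factor, so the path `(0,0)(1,1)` lies only
in the second complex.
-/

lemma hPaths_mono {V : Type} {Ed Ed' : Set (Set V)} (h : ∀ s ∈ Ed, ∃ t ∈ Ed', s ⊆ t) (q : ℕ) :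
    hPaths Ed q ⊆ hPaths Ed' q := by
  rintro p ⟨hne, hp⟩
  refine ⟨hne, fun l hl hlen => ?_⟩
  obtain ⟨s, hs, hls⟩ := hp l hl hlen
  obtain ⟨t, ht, hst⟩ := h s hs
  exact ⟨t, ht, fun x hx => hst (hls x hx)⟩

lemma pair_mem_hPaths_two {V : Type} {Ed : Set (Set V)} {x y : V} :
    [x, y] ∈ hPaths Ed 2 ↔ ∃ s ∈ Ed, x ∈ s ∧ y ∈ s := by
  constructor
  · rintro ⟨-, h⟩
    obtain ⟨s, hs, hxy⟩ := h [x, y] (List.infix_refl _) rfl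
    exact ⟨s, hs, hxy x (by simp), hxy y (by simp)⟩
  · rintro ⟨s, hs, hx, hy⟩
    refine ⟨List.cons_ne_nil _ _, fun l hl hlen => ⟨s, hs, ?_⟩⟩
    rw [hl.sublist.eq_of_length hlen]
    simp [hx, hy]

lemma prod_mem_prodEdges {V : Type} {Ed : Set (Set V)} {e : Set V} (he : e ∈ Ed)
    (hne : e.Nonempty) {e' : Set Bool} (he' : e' ∈ edgeI) : e ×ˢ e' ∈ prodEdges Ed := by
  have hne' : e'.Nonempty := by rcases he' with rfl | rfl | rfl <;> simp
  exact ⟨e, he, e', he', subset_rfl, Set.fst_image_prod _ hne', Set.snd_image_prod hne _⟩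

lemma pair_mem_prodEdges {V : Type} {Ed : Set (Set V)} {a a' : V} (h : {a, a'} ∈ Ed) :
    {(a, false), (a', true)} ∈ prodEdges Ed := by
  refine ⟨{a, a'}, h, {false, true}, by simp [edgeI], ?_, ?_, ?_⟩
  · rintro _ (rfl | rfl) <;> simp
  · simp [Set.image_insert_eq]
  · simp [Set.image_insert_eq]

lemma eEdge_mem_eEdges (G : DiHyp) (e : G.E) : eEdge G e ∈ eEdges G := ⟨e, rfl⟩

lemma exists_eEdge_superset_of_mem_P01 {G : DiHyp} {A : Set G.V} (hA : A ∈ G.P01) :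
    ∃ e, A ⊆ eEdge G e := by
  obtain ⟨e, rfl | rfl⟩ := hA
  exacts [⟨e, Set.subset_union_left⟩, ⟨e, Set.subset_union_right⟩]

lemma eq_singleton_of_mem_P01_lineI1 {b : Bool} {C : Set Bool} (h : C ∈ (lineI1 b).P01) :
    C = {false} ∨ C = {true} := by
  obtain ⟨_, rfl | rfl⟩ := h <;> cases b <;> simp [lineI1]

lemma mem_edgeI_of_mem_P01_lineI1 {b : Bool} {C : Set Bool} (h : C ∈ (lineI1 b).P01) :
    C ∈ edgeI := by
  rcases eq_singleton_of_mem_P01_lineI1 h with h | h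
  exacts [Or.inl h, Or.inr (Or.inl h)]

lemma exists_prodEdges_superset_of_mem_eEdges_box {G : DiHyp}
    (hG : ∀ e, (eEdge G e).Nonempty) (b : Bool) {s : Set (G.V × Bool)}
    (hs : s ∈ eEdges (G.box (lineI1 b))) : ∃ t ∈ prodEdges (eEdges G), s ⊆ t := by
  obtain ⟨e, rfl⟩ := hs
  rcases e with ⟨e, C, hC⟩ | ⟨⟨A, hA⟩, -⟩
  · refine ⟨eEdge G e ×ˢ C,
      prod_mem_prodEdges (eEdge_mem_eEdges G e) (hG e) (mem_edgeI_of_mem_P01_lineI1 hC), ?_⟩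
    exact Set.union_prod.ge
  · obtain ⟨e, hAe⟩ := exists_eEdge_superset_of_mem_P01 hA
    refine ⟨eEdge G e ×ˢ {false, true},
      prod_mem_prodEdges (eEdge_mem_eEdges G e) (hG e) (by simp [edgeI]), ?_⟩
    rw [← Bool.univ_eq]
    exact Set.union_subset (Set.prod_mono hAe (Set.subset_univ _))
      (Set.prod_mono hAe (Set.subset_univ _))

lemma eEdge_lineI1 (b : Bool) (u : Unit) : eEdge (lineI1 b) u = Set.univ :=
  Set.eq_univ_of_forall fun x : Bool => by
    cases b <;> cases x <;> first | exact Or.inl rfl | exact Or.inr rfl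

lemma lineI1_isLegal (b : Bool) : (lineI1 b).IsLegal :=
  ⟨fun _ => Set.singleton_nonempty _, fun _ => Set.singleton_nonempty _,
    fun _ => Set.disjoint_singleton.2 (by cases b <;> decide),
    Set.iUnion_eq_univ_iff.2 fun x =>
      ⟨(), show x ∈ eEdge (lineI1 b) () by rw [eEdge_lineI1]; trivial⟩⟩

lemma eq_or_eq_of_mem_eEdge_box {G H : DiHyp} (hG : ∀ A ∈ G.P01, A.Subsingleton)
    (hH : ∀ C ∈ H.P01, C.Subsingleton) (e : (G.box H).E) {x y : (G.box H).V}
    (hx : x ∈ eEdge (G.box H) e) (hy : y ∈ eEdge (G.box H) e) : x.1 = y.1 ∨ x.2 = y.2 := by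
  match e, hx, hy with
  | .inl (_, ⟨C, hC⟩), hx, hy =>
    right
    exact hH C hC (by rcases hx with h | h <;> exact h.2) (by rcases hy with h | h <;> exact h.2)
  | .inr (⟨A, hA⟩, _), hx, hy =>
    left
    exact hG A hA (by rcases hx with h | h <;> exact h.1) (by rcases hy with h | h <;> exact h.1)

lemma subsingleton_of_mem_P01_lineI1 {b : Bool} {C : Set Bool} (h : C ∈ (lineI1 b).P01) :
    C.Subsingleton := by
  rcases eq_singleton_of_mem_P01_lineI1 h with rfl | rfl <;> exact Set.subsingleton_singleton

/-- for every q ≥ 2 there is an inclusion of path complexes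
ℌ^q(𝔈(G □ I₁)) ⊆ ℌ^q(𝔈(G) × I), and this inclusion can be strict: for some
directed hypergraph G the two path complexes differ for q = 2. -/
theorem stmt_18 :
    (∀ G : DiHyp, G.IsLegal → ∀ q : ℕ, 2 ≤ q →
      hPaths (eEdges (G.box (lineI1 false))) q ⊆ hPaths (prodEdges (eEdges G)) q) ∧
    ∃ G : DiHyp, G.IsLegal ∧
      hPaths (eEdges (G.box (lineI1 false))) 2 ≠ hPaths (prodEdges (eEdges G)) 2 := by
  constructor
  · intro G hG q _
    exact hPaths_mono (fun s hs => exists_prodEdges_superset_of_mem_eEdges_box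
      (fun e => (hG.1 e).mono Set.subset_union_left) false hs) q
  · refine ⟨lineI1 false, lineI1_isLegal false, fun heq => ?_⟩
    have hdiag : [(false, false), (true, true)] ∈ hPaths (prodEdges (eEdges (lineI1 false))) 2 :=
      pair_mem_hPaths_two.2 ⟨_, pair_mem_prodEdges ⟨(), Set.ext fun _ => Iff.rfl⟩,
        Set.mem_insert _ _, Set.mem_insert_of_mem _ rfl⟩
    obtain ⟨_, ⟨e, rfl⟩, hx, hy⟩ := pair_mem_hPaths_two.1 (heq ▸ hdiag)
    rcases eq_or_eq_of_mem_eEdge_box (fun _ => subsingleton_of_mem_P01_lineI1)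
      (fun _ => subsingleton_of_mem_P01_lineI1) e hx hy with h | h <;> cases h
end
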